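/- Let u_1, u_2 ∈ F_{2^n} with u_1·u_2^{2^m} ∈ K_m and Tr_{2^m/2}(u_1·u_2^{2^m}) = 0. Define F : F_{2^n} → F_{2^n} by F(x) = x^{2^m+1} + u_1·x·Tr_{2^n/2}(u_2x), where the F_2-value Tr_{2^n/2}(u_2x) is identified with 0 or 1 in F_{2^n}. Then for every β ∈ F_{2^n} with β ∉ K_m, the component function F_β is bent, and W_{F_β}(ω) = 2^m·(−1)^{F*_β(ω)} for all ω, where, with λ = β + β^{2^m}, F*_β(ω) = Tr_{2^m/2}(λ^{−1}ω^{2^m+1}) + 1 + (Tr_{2^n/2}(λ^{−1}(βu_1)^{2^m}ω) + Tr_{2^m/2}(λ^{−1}(βu_1)^{2^m+1}))·(Tr_{2^n/2}(λ^{−1}u_2^{2^m}ω) + Tr_{2^m/2}(λ^{−1}u_2^{2^m+1})). -/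

import Mathlib

open scoped Classical BigOperators

noncomputable section

/-- The finite field with `2^k` elements. -/
abbrev GF (k : ℕ) := GaloisField 2 k

noncomputable instance (k : ℕ) : Fintype (GF k) := Fintype.ofFinite _

/-- The absolute trace `Tr_{2^k/2}`, viewed as an element of `GF k`
(its values lie in the prime field `{0,1}`). -/
def atr (k : ℕ) (x : GF k) : GF k := ∑ j ∈ Finset.range k, x ^ 2 ^ j

/-- `(-1)^b` for `b ∈ {0,1} ⊆ GF k`. -/
def chi (k : ℕ) (x : GF k) : ℤ := if x = 0 then 1 else -1

/-- The Walsh transform of a Boolean-valued function `f` on `GF k`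
(`f` takes values in the prime field `{0,1}`). -/
def walsh (k : ℕ) (f : GF k → GF k) (ω : GF k) : ℤ :=
  ∑ x : GF k, chi k (f x + atr k (ω * x))

/-- The trace `Tr_{2^m/2}` of the subfield `K_m ⊆ GF (2*m)`, viewed inside `GF (2*m)`. -/
def trKm (m : ℕ) (x : GF (2*m)) : GF (2*m) := ∑ j ∈ Finset.range m, x ^ 2 ^ j

/-- The subfield `K_m = {x : x^(2^m) = x}` of `GF (2*m)`, as a finset. -/
def Km (m : ℕ) : Finset (GF (2*m)) := Finset.univ.filter (fun x => x ^ 2 ^ m = x)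

/-- `max_{a ≠ 0, ω} |W_{F_a}(ω)|` for a vectorial function `F` on `GF (2*m)`. -/
def maxAbsW (m : ℕ) (F : GF (2*m) → GF (2*m)) : ℕ :=
  Finset.sup ((Finset.univ.filter (fun a : GF (2*m) => a ≠ 0)) ×ˢ (Finset.univ : Finset (GF (2*m))))
    (fun p => (walsh (2*m) (fun x => atr (2*m) (p.1 * F x)) p.2).natAbs)

/-- The nonlinearity `N_F = 2^(n-1) - (1/2) max_{a ≠ 0, ω} |W_{F_a}(ω)|`, `n = 2m`. -/
def nlin (m : ℕ) (F : GF (2*m) → GF (2*m)) : ℚ :=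
  2 ^ (2*m - 1) - (maxAbsW m F : ℚ) / 2

/-!
With `λ = β + β^(2^m) ∈ K_m` the component is `Tr_m(λ x^(2^m+1)) + Tr(β u₁ x) Tr(u₂ x)`. For bits
`s, t` one has `2 (-1)^(st) = 1 + (-1)^s + (-1)^t - (-1)^(s+t)`, which writes twice its Walsh
transform as a signed sum of four Walsh values of the Gold-type function `g(x) = Tr_m(λ x^(2^m+1))`,
at `ω`, `ω + β u₁`, `ω + u₂` and `ω + β u₁ + u₂`. Completing the square gives
`W_g(ν) = -2^m (-1)^(Tr_m(λ⁻¹ ν^(2^m+1)))`; the value `W_g(0) = -2^m` holds because the norm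
`x ↦ x^(2^m+1)` is `(2^m+1)`-to-one onto `K_m^×` and `Tr_m` is balanced on `K_m`. The shifts change
`Tr_m(λ⁻¹ ν^(2^m+1))` by affine terms whose cross term vanishes by the hypotheses on `u₁ u₂^(2^m)`,
and the same identity for bits recombines the four signs into one.
-/

open Finset Polynomial

def IsBit {R : Type*} [Zero R] [One R] (a : R) : Prop := a = 0 ∨ a = 1

theorem IsBit.mul {R : Type*} [MulZeroOneClass R] {a b : R} (ha : IsBit a) (hb : IsBit b) :
    IsBit (a * b) := by
  rcases ha with rfl | rfl
  · simp [IsBit]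
  · simpa using hb

section CharTwo

variable {R : Type*} [CommRing R] [CharP R 2]

theorem IsBit.add {a b : R} (ha : IsBit a) (hb : IsBit b) : IsBit (a + b) := by
  rcases ha with rfl | rfl <;> rcases hb with rfl | rfl <;> simp [IsBit, CharTwo.add_self_eq_zero]

theorem sq_sum_pow_two_pow_add_self (K : ℕ) (x : R) :
    (∑ j ∈ range K, x ^ 2 ^ j) ^ 2 + x = ∑ j ∈ range K, x ^ 2 ^ j + x ^ 2 ^ K := by
  rw [sum_pow_char, ← sum_range_succ, sum_range_succ', pow_zero, pow_one]
  simp only [← pow_mul, ← pow_succ]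

theorem isBit_sum_pow_two_pow [IsDomain R] {K : ℕ} {x : R} (hx : x ^ 2 ^ K = x) :
    IsBit (∑ j ∈ range K, x ^ 2 ^ j) := by
  have h := sq_sum_pow_two_pow_add_self K x
  rw [hx, add_left_inj, sq] at h
  exact IsIdempotentElem.iff_eq_zero_or_one.1 h

end CharTwo

theorem card_filter_pow_eq_le {R : Type*} [CommRing R] [IsDomain R] (s : Finset R) {n : ℕ}
    (hn : 0 < n) (y : R) : #{x ∈ s | x ^ n = y} ≤ n := by
  refine (card_le_card fun x hx => ?_).trans
    ((Multiset.toFinset_card_le _).trans (card_nthRoots n y))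
  rw [Multiset.mem_toFinset, mem_nthRoots hn]
  exact (mem_filter.1 hx).2

section Traces

variable {k m : ℕ}

theorem GF.pow_two_pow_self (x : GF k) : x ^ 2 ^ k = x := by
  rcases eq_or_ne k 0 with rfl | hk
  · simp
  rw [← GaloisField.card 2 k hk, Nat.card_eq_fintype_card]
  exact FiniteField.pow_card x

theorem atr_add (x y : GF k) : atr k (x + y) = atr k x + atr k y := by
  simp only [atr, add_pow_char_pow, sum_add_distrib]

theorem trKm_add (x y : GF (2*m)) : trKm m (x + y) = trKm m x + trKm m y := by
  simp only [trKm, add_pow_char_pow, sum_add_distrib]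

theorem isBit_atr (x : GF k) : IsBit (atr k x) :=
  isBit_sum_pow_two_pow (GF.pow_two_pow_self x)

theorem isBit_trKm {x : GF (2*m)} (hx : x ^ 2 ^ m = x) : IsBit (trKm m x) :=
  isBit_sum_pow_two_pow hx

theorem atr_mul_of_isBit (y : GF k) {s : GF k} (hs : IsBit s) : atr k (y * s) = atr k y * s := by
  rcases hs with rfl | rfl <;> simp [atr]

theorem pow_two_pow_pow_two_pow (z : GF (2*m)) : (z ^ 2 ^ m) ^ 2 ^ m = z := by
  rw [← pow_mul, ← pow_add, ← two_mul, GF.pow_two_pow_self]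

theorem pow_norm_pow_two_pow (x : GF (2*m)) : (x ^ (2 ^ m + 1)) ^ 2 ^ m = x ^ (2 ^ m + 1) := by
  rw [← pow_mul, add_one_mul, pow_add, pow_mul, pow_two_pow_pow_two_pow, pow_succ']

theorem atr_eq_trKm_add_pow (x : GF (2*m)) : atr (2*m) x = trKm m (x + x ^ 2 ^ m) := by
  rw [trKm_add, atr, trKm, trKm, show range (2*m) = range (m + m) by rw [two_mul],
    sum_range_add]
  congr 1
  exact sum_congr rfl fun j _ => by rw [pow_add, pow_mul]

theorem atr_eq_zero_of_pow_two_pow {z : GF (2*m)} (hz : z ^ 2 ^ m = z) : atr (2*m) z = 0 := by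
  rw [atr_eq_trKm_add_pow, hz, CharTwo.add_self_eq_zero]
  simp [trKm]

end Traces

section Chi

variable {k : ℕ}

theorem chi_one : chi k 1 = -1 := if_neg one_ne_zero

theorem chi_mul_self (a : GF k) : chi k a * chi k a = 1 := by
  unfold chi; split_ifs <;> norm_num

theorem chi_add {a b : GF k} (ha : IsBit a) (hb : IsBit b) : chi k (a + b) = chi k a * chi k b := by
  rcases ha with rfl | rfl <;> rcases hb with rfl | rfl <;>
    simp [chi, CharTwo.add_self_eq_zero]

theorem two_mul_chi_mul {s t : GF k} (hs : IsBit s) (ht : IsBit t) :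
    2 * chi k (s * t) = 1 + chi k s + chi k t - chi k s * chi k t := by
  rcases hs with rfl | rfl <;> rcases ht with rfl | rfl <;> norm_num [chi]

end Chi

section Norm

variable {m : ℕ}

theorem two_pow_two_mul_sub_one : 2 ^ (2*m) - 1 = (2 ^ m - 1) * (2 ^ m + 1) := by
  rw [mul_comm 2 m, pow_mul, mul_comm, ← Nat.sq_sub_sq, one_pow]

theorem zero_mem_Km : (0 : GF (2*m)) ∈ Km m := by
  simp [Km]

theorem pow_norm_mem_Km_erase_zero {x : GF (2*m)} (hx : x ≠ 0) :
    x ^ (2 ^ m + 1) ∈ (Km m).erase 0 := by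
  simp [Km, hx, pow_norm_pow_two_pow]

theorem card_Km_erase_zero_le (hm : 0 < m) : #((Km m).erase 0) ≤ 2 ^ m - 1 := by
  refine (card_le_card fun x hx => ?_).trans
    (card_filter_pow_eq_le univ (Nat.sub_pos_of_lt (Nat.one_lt_two_pow hm.ne')) 1)
  obtain ⟨hx0, hx⟩ := mem_erase.1 hx
  simp only [Km, mem_filter, mem_univ, true_and] at hx
  simp [pow_sub₀ x hx0 Nat.one_le_two_pow, hx, hx0]

theorem card_units_eq_sum_card_norm_fiber (hm : 0 < m) :
    2 ^ (2*m) - 1 = ∑ y ∈ (Km m).erase 0, #{x ∈ univ.erase 0 | x ^ (2 ^ m + 1) = y} := by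
  have h := card_eq_sum_card_fiberwise
    fun (x : GF (2*m)) hx => pow_norm_mem_Km_erase_zero (ne_of_mem_erase (s := univ) hx)
  rw [card_erase_of_mem (mem_univ 0), card_univ, ← Nat.card_eq_fintype_card,
    GaloisField.card 2 (2*m) (by omega)] at h
  convert h

-- `2^(2m) - 1` points fall into at most `2^m - 1` fibres of at most `2^m + 1` points each,
-- so all these bounds are attained.
theorem card_Km_erase_zero (hm : 0 < m) : #((Km m).erase 0) = 2 ^ m - 1 := by
  refine le_antisymm (card_Km_erase_zero_le hm)
    (Nat.le_of_mul_le_mul_right (c := 2 ^ m + 1) ?_ (by positivity))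
  calc (2 ^ m - 1) * (2 ^ m + 1)
      = ∑ y ∈ (Km m).erase 0, #{x ∈ univ.erase 0 | x ^ (2 ^ m + 1) = y} := by
        rw [← two_pow_two_mul_sub_one, card_units_eq_sum_card_norm_fiber hm]
    _ ≤ ∑ _y ∈ (Km m).erase 0, (2 ^ m + 1) :=
        sum_le_sum fun y _ => card_filter_pow_eq_le _ (by positivity) y
    _ = #((Km m).erase 0) * (2 ^ m + 1) := by rw [sum_const, smul_eq_mul]

theorem card_Km (hm : 0 < m) : #(Km m) = 2 ^ m := by
  have := Nat.one_le_two_pow (n := m)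
  rw [← card_erase_add_one zero_mem_Km, card_Km_erase_zero hm]
  omega

theorem card_norm_fiber (hm : 0 < m) {y : GF (2*m)} (hy : y ∈ (Km m).erase 0) :
    #{x ∈ univ.erase 0 | x ^ (2 ^ m + 1) = y} = 2 ^ m + 1 := by
  refine (sum_eq_sum_iff_of_le fun y _ => card_filter_pow_eq_le _ (by positivity) y).1 ?_ y hy
  rw [← card_units_eq_sum_card_norm_fiber hm, sum_const, card_Km_erase_zero hm, smul_eq_mul,
    two_pow_two_mul_sub_one]

theorem sum_comp_pow_norm (hm : 0 < m) (f : GF (2*m) → ℤ) :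
    ∑ x, f (x ^ (2 ^ m + 1)) = f 0 + (2 ^ m + 1) * ∑ y ∈ (Km m).erase 0, f y := by
  rw [← add_sum_erase _ _ (mem_univ 0), zero_pow (by positivity),
    ← sum_fiberwise_of_maps_to fun x hx => pow_norm_mem_Km_erase_zero (ne_of_mem_erase hx),
    mul_sum]
  congr 1
  refine sum_congr rfl fun y hy => ?_
  rw [sum_congr rfl fun x hx => congrArg f (mem_filter.1 hx).2, sum_const, card_norm_fiber hm hy,
    nsmul_eq_mul]
  push_cast
  rfl

theorem exists_mem_Km_trKm_ne_zero (hm : 0 < m) : ∃ z ∈ Km m, trKm m z ≠ 0 := by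
  by_contra! h
  set P : (GF (2*m))[X] := ∑ j ∈ range m, X ^ 2 ^ j
  have hP1 : P.coeff 1 = 1 := by
    simp [P, finsetSum_coeff, coeff_X_pow, eq_comm (a := 1), hm]
  have hP : P ≠ 0 := fun h0 => by simp [h0] at hP1
  have hdeg : P.natDegree ≤ 2 ^ (m - 1) :=
    natDegree_sum_le_of_forall_le _ _ fun j hj =>
      (natDegree_X_pow_le _).trans (Nat.pow_le_pow_right two_pos (by simp at hj; omega))
  have hroots : (Km m).val ⊆ P.roots := fun z hz => by
    rw [mem_roots hP, IsRoot, eval_finsetSum]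
    simpa [trKm] using h z hz
  have := (card_le_degree_of_subset_roots hroots).trans hdeg
  rw [card_Km hm] at this
  exact absurd this (not_le.2 (Nat.pow_lt_pow_right one_lt_two (by omega)))

end Norm

section GoldSums

variable {m : ℕ} {l : GF (2*m)}

theorem sum_chi_trKm_mul_eq_zero (hm : 0 < m) (hl0 : l ≠ 0) (hl : l ^ 2 ^ m = l) :
    ∑ y ∈ Km m, chi (2*m) (trKm m (l * y)) = 0 := by
  have hmem : ∀ {y : GF (2*m)}, y ∈ Km m ↔ y ^ 2 ^ m = y := by simp [Km]
  obtain ⟨z, hz, hz0⟩ := exists_mem_Km_trKm_ne_zero hm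
  set y₀ := l⁻¹ * z
  have hy₀ : y₀ ∈ Km m := hmem.2 (by rw [mul_pow, inv_pow, hl, hmem.1 hz])
  have hy₀0 : y₀ ≠ 0 := mul_ne_zero (inv_ne_zero hl0) fun h => hz0 (by simp [h, trKm])
  have htr : trKm m (l * y₀) = 1 := by
    rw [mul_inv_cancel_left₀ hl0]
    exact (isBit_trKm (hmem.1 hz)).resolve_left hz0
  refine sum_involution (fun y _ => y + y₀) (fun y hy => ?_) (fun y _ _ => by simpa using hy₀0)
    (fun y hy => hmem.2 (by rw [add_pow_char_pow, hmem.1 hy, hmem.1 hy₀]))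
    (fun y _ => by rw [add_assoc, CharTwo.add_self_eq_zero, add_zero])
  rw [mul_add, trKm_add, htr, chi_add (isBit_trKm (by rw [mul_pow, hl, hmem.1 hy])) (Or.inr rfl),
    chi_one]
  ring

theorem sum_chi_trKm_mul_pow_norm (hm : 0 < m) (hl0 : l ≠ 0) (hl : l ^ 2 ^ m = l) :
    ∑ x, chi (2*m) (trKm m (l * x ^ (2 ^ m + 1))) = -2 ^ m := by
  have h0 : chi (2*m) (trKm m (l * 0)) = 1 := by simp [trKm, chi]
  have hsum := sum_chi_trKm_mul_eq_zero hm hl0 hl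
  rw [← add_sum_erase _ _ zero_mem_Km, h0] at hsum
  rw [sum_comp_pow_norm hm fun y => chi (2*m) (trKm m (l * y)), h0]
  linear_combination (2 ^ m + 1 : ℤ) * hsum

end GoldSums

section Walsh

variable {m : ℕ} {l : GF (2*m)}

-- The derivative of the quadratic form `ω ↦ Tr_m(l ω^(2^m+1))` in the direction `v`.
def normDeriv (m : ℕ) (l v ω : GF (2*m)) : GF (2*m) :=
  atr (2*m) (l * v ^ 2 ^ m * ω) + trKm m (l * v ^ (2 ^ m + 1))

theorem trKm_mul_add_pow_norm (hl : l ^ 2 ^ m = l) (ω v : GF (2*m)) :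
    trKm m (l * (ω + v) ^ (2 ^ m + 1)) = trKm m (l * ω ^ (2 ^ m + 1)) + normDeriv m l v ω := by
  have hcross : atr (2*m) (l * v ^ 2 ^ m * ω) = trKm m (l * (ω ^ 2 ^ m * v + ω * v ^ 2 ^ m)) := by
    rw [atr_eq_trKm_add_pow]
    congr 1
    rw [mul_pow, mul_pow, hl, pow_two_pow_pow_two_pow]
    ring
  rw [normDeriv, hcross, ← trKm_add, ← trKm_add, pow_succ, add_pow_char_pow, pow_succ, pow_succ]
  ring_nf

theorem isBit_trKm_mul_pow_norm (hl : l ^ 2 ^ m = l) (x : GF (2*m)) :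
    IsBit (trKm m (l * x ^ (2 ^ m + 1))) :=
  isBit_trKm (by rw [mul_pow, hl, pow_norm_pow_two_pow])

theorem isBit_normDeriv (hl : l ^ 2 ^ m = l) (v ω : GF (2*m)) : IsBit (normDeriv m l v ω) :=
  (isBit_atr _).add (isBit_trKm_mul_pow_norm hl v)

theorem chi_trKm_mul_add_pow_norm (hl : l ^ 2 ^ m = l) (ω v : GF (2*m)) :
    chi (2*m) (trKm m (l * (ω + v) ^ (2 ^ m + 1)))
      = chi (2*m) (trKm m (l * ω ^ (2 ^ m + 1))) * chi (2*m) (normDeriv m l v ω) := by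
  rw [trKm_mul_add_pow_norm hl, chi_add (isBit_trKm_mul_pow_norm hl ω) (isBit_normDeriv hl v ω)]

theorem normDeriv_add (hl : l ^ 2 ^ m = l) (u w ω : GF (2*m)) :
    normDeriv m l (u + w) ω
      = normDeriv m l u ω + normDeriv m l w ω + atr (2*m) (l * w ^ 2 ^ m * u) := by
  simp only [normDeriv, trKm_mul_add_pow_norm hl, add_pow_char_pow, mul_add, add_mul, atr_add]
  ring

theorem walsh_trKm_mul_pow_norm (hm : 0 < m) (hl0 : l ≠ 0) (hl : l ^ 2 ^ m = l) (ν : GF (2*m)) :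
    walsh (2*m) (fun x => trKm m (l * x ^ (2 ^ m + 1))) ν
      = -2 ^ m * chi (2*m) (trKm m (l⁻¹ * ν ^ (2 ^ m + 1))) := by
  set c := (l⁻¹ * ν) ^ 2 ^ m
  have hlinv : l⁻¹ ^ 2 ^ m = l⁻¹ := by rw [inv_pow, hl]
  have hlc : l * c ^ 2 ^ m = ν := by rw [pow_two_pow_pow_two_pow, mul_inv_cancel_left₀ hl0]
  have hνc : ν * c = l⁻¹ * ν ^ (2 ^ m + 1) := by simp only [c, mul_pow, hlinv, pow_succ]; ring
  have hlc1 : l * c ^ (2 ^ m + 1) = l⁻¹ * ν ^ (2 ^ m + 1) := by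
    rw [pow_succ, ← mul_assoc, hlc, hνc]
  have hatr : atr (2*m) (ν * c) = 0 := by
    rw [hνc]
    exact atr_eq_zero_of_pow_two_pow (by rw [mul_pow, hlinv, pow_norm_pow_two_pow])
  -- completing the square: `x ↦ x + c` absorbs the linear term
  have hshift : ∀ x, trKm m (l * (x + c) ^ (2 ^ m + 1)) + atr (2*m) (ν * (x + c))
      = trKm m (l * x ^ (2 ^ m + 1)) + trKm m (l⁻¹ * ν ^ (2 ^ m + 1)) := fun x => by
    rw [trKm_mul_add_pow_norm hl, normDeriv, hlc, hlc1, mul_add, atr_add, hatr]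
    linear_combination CharTwo.add_self_eq_zero (atr (2*m) (ν * x))
  simp only [walsh]
  rw [← Equiv.sum_comp (Equiv.addRight c)]
  simp only [Equiv.coe_addRight, hshift, chi_add (isBit_trKm_mul_pow_norm hl _)
    (isBit_trKm_mul_pow_norm (by rw [hlinv]) ν)]
  rw [← sum_mul, sum_chi_trKm_mul_pow_norm hm hl0 hl]

theorem two_mul_walsh_add_mul_atr {k : ℕ} {f : GF k → GF k} (hf : ∀ x, IsBit (f x))
    (u v ω : GF k) :
    2 * walsh k (fun x => f x + atr k (u * x) * atr k (v * x)) ω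
      = walsh k f ω + walsh k f (ω + u) + walsh k f (ω + v) - walsh k f (ω + (u + v)) := by
  simp only [walsh, mul_sum, ← sum_add_distrib, ← sum_sub_distrib]
  refine sum_congr rfl fun x _ => ?_
  have hb := (hf x).add (isBit_atr (ω * x))
  have hs := isBit_atr (u * x)
  have ht := isBit_atr (v * x)
  have shift : ∀ c, IsBit c → chi k (f x + (atr k (ω * x) + c))
      = chi k (f x + atr k (ω * x)) * chi k c := fun c hc => by rw [← chi_add hb hc, add_assoc]
  simp only [add_mul, atr_add, shift _ hs, shift _ ht, shift _ (hs.add ht), chi_add hs ht]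
  rw [add_right_comm, chi_add hb (hs.mul ht)]
  linear_combination chi k (f x + atr k (ω * x)) * two_mul_chi_mul hs ht

theorem atr_mul_component (β u₁ u₂ x : GF (2*m)) :
    atr (2*m) (β * (x ^ (2 ^ m + 1) + u₁ * x * atr (2*m) (u₂ * x)))
      = trKm m ((β + β ^ 2 ^ m) * x ^ (2 ^ m + 1))
        + atr (2*m) (β * u₁ * x) * atr (2*m) (u₂ * x) := by
  have hnorm : atr (2*m) (β * x ^ (2 ^ m + 1)) = trKm m ((β + β ^ 2 ^ m) * x ^ (2 ^ m + 1)) := by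
    rw [atr_eq_trKm_add_pow, mul_pow, pow_norm_pow_two_pow, add_mul]
  rw [mul_add, atr_add, hnorm, ← mul_assoc, ← mul_assoc, atr_mul_of_isBit _ (isBit_atr _)]

end Walsh

theorem walsh_atr_mul_component {m : ℕ} {u₁ u₂ β : GF (2*m)}
    (hK : (u₁ * u₂ ^ 2 ^ m) ^ 2 ^ m = u₁ * u₂ ^ 2 ^ m) (htr : trKm m (u₁ * u₂ ^ 2 ^ m) = 0)
    (hβ : β ^ 2 ^ m ≠ β) (ω : GF (2*m)) :
    walsh (2*m) (fun x => atr (2*m) (β * (x ^ (2 ^ m + 1) + u₁ * x * atr (2*m) (u₂ * x)))) ω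
      = 2 ^ m * chi (2*m) (trKm m ((β + β ^ 2 ^ m)⁻¹ * ω ^ (2 ^ m + 1)) + 1
          + normDeriv m (β + β ^ 2 ^ m)⁻¹ (β * u₁) ω * normDeriv m (β + β ^ 2 ^ m)⁻¹ u₂ ω) := by
  have hm : 0 < m := Nat.pos_of_ne_zero fun h => hβ (by subst h; simp)
  set lam := β + β ^ 2 ^ m
  have hl : lam ^ 2 ^ m = lam := by rw [add_pow_char_pow, pow_two_pow_pow_two_pow, add_comm]
  have hl0 : lam ≠ 0 := fun h => hβ (CharTwo.add_eq_zero.1 h).symm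
  have hlinv : lam⁻¹ ^ 2 ^ m = lam⁻¹ := by rw [inv_pow, hl]
  -- the hypotheses on `u₁ u₂^(2^m)` kill the cross term of the shifts by `β u₁` and `u₂`
  have hcross : atr (2*m) (lam⁻¹ * u₂ ^ 2 ^ m * (β * u₁)) = 0 := by
    rw [show lam⁻¹ * u₂ ^ 2 ^ m * (β * u₁) = lam⁻¹ * β * (u₁ * u₂ ^ 2 ^ m) by ring,
      atr_eq_trKm_add_pow, mul_pow, hK, ← add_mul, mul_pow, hlinv, ← mul_add,
      inv_mul_cancel₀ hl0, one_mul, htr]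
  have hcomp : (fun x => atr (2*m) (β * (x ^ (2 ^ m + 1) + u₁ * x * atr (2*m) (u₂ * x))))
      = fun x => trKm m (lam * x ^ (2 ^ m + 1)) + atr (2*m) (β * u₁ * x) * atr (2*m) (u₂ * x) :=
    funext (atr_mul_component β u₁ u₂)
  have h2 := two_mul_walsh_add_mul_atr (isBit_trKm_mul_pow_norm hl) (β * u₁) u₂ ω
  simp only [walsh_trKm_mul_pow_norm hm hl0 hl, chi_trKm_mul_add_pow_norm hlinv,
    normDeriv_add hlinv, hcross, add_zero,
    chi_add (isBit_normDeriv hlinv _ _) (isBit_normDeriv hlinv _ _)] at h2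
  have hab := two_mul_chi_mul (isBit_normDeriv hlinv (β * u₁) ω) (isBit_normDeriv hlinv u₂ ω)
  have hT := isBit_trKm_mul_pow_norm hlinv ω
  rw [hcomp, chi_add (hT.add (Or.inr rfl)) ((isBit_normDeriv hlinv _ _).mul
    (isBit_normDeriv hlinv _ _)), chi_add hT (Or.inr rfl), chi_one]
  refine mul_left_cancel₀ (two_ne_zero' ℤ) ?_
  linear_combination h2 + 2 ^ m * chi (2*m) (trKm m (lam⁻¹ * ω ^ (2 ^ m + 1))) * hab

theorem stmt8_general (m : ℕ)
    (u₁ u₂ : GF (2*m))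
    (hK : (u₁ * u₂ ^ 2 ^ m) ^ 2 ^ m = u₁ * u₂ ^ 2 ^ m)
    (htr : trKm m (u₁ * u₂ ^ 2 ^ m) = 0)
    (F : GF (2*m) → GF (2*m))
    (hF : ∀ x, F x = x ^ (2 ^ m + 1) + u₁ * x * atr (2*m) (u₂ * x))
    (β : GF (2*m)) (hβ : β ^ 2 ^ m ≠ β)
    (lam : GF (2*m)) (hlam : lam = β + β ^ 2 ^ m) :
    (∀ ω, (walsh (2*m) (fun x => atr (2*m) (β * F x)) ω) ^ 2 = 2 ^ (2*m)) ∧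
    (∀ ω, walsh (2*m) (fun x => atr (2*m) (β * F x)) ω
      = 2 ^ m * chi (2*m)
          (trKm m (lam⁻¹ * ω ^ (2 ^ m + 1)) + 1
            + (atr (2*m) (lam⁻¹ * (β * u₁) ^ 2 ^ m * ω)
                + trKm m (lam⁻¹ * (β * u₁) ^ (2 ^ m + 1)))
              * (atr (2*m) (lam⁻¹ * u₂ ^ 2 ^ m * ω)
                + trKm m (lam⁻¹ * u₂ ^ (2 ^ m + 1))))) := by
  obtain rfl : F = _ := funext hF
  subst hlam
  have hW := walsh_atr_mul_component hK htr hβ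
  refine ⟨fun ω => ?_, hW⟩
  rw [hW, mul_pow, ← pow_mul, mul_comm m, sq (chi _ _), chi_mul_self, mul_one]

/-- `F(x) = x^(2^m+1) + u₁·x·Tr_{2^n/2}(u₂x)` with
`u₁u₂^(2^m) ∈ K_m` and `Tr_{2^m/2}(u₁u₂^(2^m)) = 0`: every component `F_β`,
`β ∉ K_m`, is bent with `W_{F_β}(ω) = 2^m·(−1)^(F*_β(ω))`, `F*_β` as stated. -/
theorem stmt8 (m : ℕ) (hm : 1 ≤ m)
    (u₁ u₂ : GF (2*m))
    (hK : (u₁ * u₂ ^ 2 ^ m) ^ 2 ^ m = u₁ * u₂ ^ 2 ^ m)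
    (htr : trKm m (u₁ * u₂ ^ 2 ^ m) = 0)
    (F : GF (2*m) → GF (2*m))
    (hF : ∀ x, F x = x ^ (2 ^ m + 1) + u₁ * x * atr (2*m) (u₂ * x))
    (β : GF (2*m)) (hβ : β ^ 2 ^ m ≠ β)
    (lam : GF (2*m)) (hlam : lam = β + β ^ 2 ^ m) :
    (∀ ω, (walsh (2*m) (fun x => atr (2*m) (β * F x)) ω) ^ 2 = 2 ^ (2*m)) ∧
    (∀ ω, walsh (2*m) (fun x => atr (2*m) (β * F x)) ω
      = 2 ^ m * chi (2*m)
          (trKm m (lam⁻¹ * ω ^ (2 ^ m + 1)) + 1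
            + (atr (2*m) (lam⁻¹ * (β * u₁) ^ 2 ^ m * ω)
                + trKm m (lam⁻¹ * (β * u₁) ^ (2 ^ m + 1)))
              * (atr (2*m) (lam⁻¹ * u₂ ^ 2 ^ m * ω)
                + trKm m (lam⁻¹ * u₂ ^ (2 ^ m + 1))))) :=
  stmt8_general m u₁ u₂ hK htr F hF β hβ lam hlam
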